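/- Let G be an (n−3)-regular simple graph of order n ≥ 5 and let B ⊆ E(G) be a Roman bondage set of G (i.e., γ_R(G − B) > γ_R(G)). Then for every vertex x of G, at least one edge of B is incident with x. -/

import Mathlib

open SimpleGraph

/-- The Roman domination number: the minimum weight of a Roman dominating function,
i.e. a function `f : V → ℕ` with values in `{0,1,2}` such that every vertex with
value `0` has a neighbor with value `2`. -/
noncomputable def romanDominationNumber {V : Type*} [Fintype V] (G : SimpleGraph V) : ℕ :=
  sInf {w | ∃ f : V → ℕ, (∀ v, f v ≤ 2) ∧
    (∀ v, f v = 0 → ∃ u, G.Adj v u ∧ f u = 2) ∧ w = ∑ v, f v}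

/-- The Roman bondage number: the minimum cardinality of a set `B` of edges of `G`
whose removal increases the Roman domination number. -/
noncomputable def romanBondageNumber {V : Type*} [Fintype V] (G : SimpleGraph V) : ℕ :=
  sInf {k | ∃ B : Finset (Sym2 V), ↑B ⊆ G.edgeSet ∧ B.card = k ∧
    romanDominationNumber G < romanDominationNumber (G.deleteEdges ↑B)}

/-!
A Roman dominating function with a single vertex `u` of value `2` must give value at least `1`
to every vertex outside the closed neighbourhood of `u`; when all degrees are at most `n - 3`
there are at least two such vertices, so `γ_R(G) ≥ 4`. On the other hand, if no edge of `B`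
meets `x`, then `x` keeps its `n - 3` neighbours in `G - B`, and assigning `2` to `x`, `0` to its
neighbours and `1` to the two remaining vertices is a Roman dominating function of weight `4`.
-/

open Finset

namespace SimpleGraph

variable {V : Type*}

def IsRomanDominating (G : SimpleGraph V) (f : V → ℕ) : Prop :=
  (∀ v, f v ≤ 2) ∧ ∀ v, f v = 0 → ∃ u, G.Adj v u ∧ f u = 2

theorem romanDominationNumber_le_sum [Fintype V] {G : SimpleGraph V} {f : V → ℕ}
    (hf : G.IsRomanDominating f) : romanDominationNumber G ≤ ∑ v, f v :=
  Nat.sInf_le ⟨f, hf.1, hf.2, rfl⟩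

theorem le_romanDominationNumber [Fintype V] {G : SimpleGraph V} {k : ℕ}
    (h : ∀ f, G.IsRomanDominating f → k ≤ ∑ v, f v) : k ≤ romanDominationNumber G := by
  refine le_csInf ⟨_, fun _ => 1, fun _ => by norm_num, fun _ h => absurd h one_ne_zero, rfl⟩ ?_
  rintro _ ⟨f, hf2, hdom, rfl⟩
  exact h f ⟨hf2, hdom⟩

theorem romanDominationNumber_add_card_le [Fintype V] [DecidableEq V] (G : SimpleGraph V) (x : V)
    (s : Finset V) (hs : ∀ v ∈ s, G.Adj x v) :
    romanDominationNumber G + #s ≤ Fintype.card V + 1 := by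
  have hx : x ∉ s := fun h => G.loopless.irrefl x (hs x h)
  let f : V → ℕ := fun v => if v = x then 2 else if v ∈ s then 0 else 1
  have hf : G.IsRomanDominating f := by
    refine ⟨fun v => by unfold f; split_ifs <;> norm_num, fun v hv => ⟨x, ?_, if_pos rfl⟩⟩
    by_cases hvx : v = x
    · simp [f, hvx] at hv
    by_cases hvs : v ∈ s
    · exact (hs v hvs).symm
    · simp [f, hvx, hvs] at hv
  have hpoint : ∀ v, f v + (if v ∈ s then 1 else 0) = 1 + (if v = x then 1 else 0) := by
    intro v
    by_cases hvx : v = x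
    · simp [f, hvx, hx]
    · by_cases hvs : v ∈ s <;> simp [f, hvx, hvs]
  have hweight : ∑ v, f v + #s = Fintype.card V + 1 := by
    have := Finset.sum_congr rfl fun v (_ : v ∈ univ) => hpoint v
    simpa [Finset.sum_add_distrib, Finset.sum_boole, Finset.filter_mem_eq_inter] using this
  have := romanDominationNumber_le_sum hf
  omega

theorem IsRomanDominating.one_le_of_not_adj {G : SimpleGraph V} {f : V → ℕ}
    (hf : G.IsRomanDominating f) {u v : V} (hunique : ∀ w ≠ u, f w ≠ 2) (huv : ¬G.Adj v u) :
    1 ≤ f v := by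
  refine Nat.one_le_iff_ne_zero.2 fun h0 => ?_
  obtain ⟨w, hvw, hw⟩ := hf.2 v h0
  obtain rfl : w = u := by_contra fun hwu => hunique w hwu hw
  exact huv hvw

theorem four_le_romanDominationNumber [Fintype V] [DecidableEq V] (G : SimpleGraph V) [DecidableRel G.Adj]
    (h4 : 4 ≤ Fintype.card V) (hdeg : ∀ v, G.degree v + 3 ≤ Fintype.card V) :
    4 ≤ romanDominationNumber G := by
  refine le_romanDominationNumber fun f hf => ?_
  by_cases htwo : ∃ u, f u = 2
  swap
  · push Not at htwo
    have hpos : ∀ v, 1 ≤ f v := fun v => Nat.one_le_iff_ne_zero.2 fun h0 =>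
      let ⟨u, _, hu⟩ := hf.2 v h0
      htwo u hu
    calc 4 ≤ Fintype.card V := h4
      _ = ∑ _v : V, 1 := by simp
      _ ≤ ∑ v, f v := sum_le_sum fun v _ => hpos v
  obtain ⟨u, hu⟩ := htwo
  by_cases hother : ∃ v ≠ u, f v = 2
  · obtain ⟨v, hvu, hv⟩ := hother
    calc 4 = f v + f u := by omega
      _ ≤ ∑ w, f w := add_le_sum (fun _ _ => Nat.zero_le _) (mem_univ _) (mem_univ _) hvu
  push Not at hother
  set T := (insert u (G.neighborFinset u))ᶜ
  have hTcard : 2 ≤ #T := by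
    rw [card_compl, card_insert_of_notMem (by simp), card_neighborFinset_eq_degree]
    have := hdeg u
    omega
  have hTpos : ∀ v ∈ T, 1 ≤ f v := fun v hvT =>
    hf.one_le_of_not_adj hother fun hvu => by simp [T, hvu.symm] at hvT
  calc 4 ≤ f u + #T := by omega
    _ ≤ f u + ∑ v ∈ T, f v := by gcongr; simpa using card_nsmul_le_sum T f 1 hTpos
    _ = ∑ v ∈ insert u T, f v := (sum_insert (by simp [T])).symm
    _ ≤ ∑ v, f v := sum_le_sum_of_subset (subset_univ _)

end SimpleGraph

theorem roman_bondage_set_covers_general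
    {V : Type*} [Fintype V] [DecidableEq V] (G : SimpleGraph V) [DecidableRel G.Adj]
    (n : ℕ) (hn : Fintype.card V = n) (h5 : 5 ≤ n)
    (hreg : G.IsRegularOfDegree (n - 3))
    (B : Finset (Sym2 V))
    (hB : romanDominationNumber G < romanDominationNumber (G.deleteEdges ↑B)) :
    ∀ x : V, ∃ e ∈ B, x ∈ e := by
  intro x
  by_contra! hx
  have hlower : 4 ≤ romanDominationNumber G :=
    G.four_le_romanDominationNumber (by omega) fun v => by rw [hreg v]; omega
  have hkept : ∀ v ∈ G.neighborFinset x, (G.deleteEdges ↑B).Adj x v := fun v hv =>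
    deleteEdges_adj.2 ⟨(mem_neighborFinset G x v).1 hv, fun he => hx _ he (Sym2.mem_mk_left x v)⟩
  have hupper := (G.deleteEdges ↑B).romanDominationNumber_add_card_le x _ hkept
  rw [card_neighborFinset_eq_degree, hreg x, hn] at hupper
  omega

/-- In an `(n-3)`-regular graph of order `n ≥ 5`, every Roman bondage set contains
an edge incident with each vertex. -/
theorem roman_bondage_set_covers
    {V : Type*} [Fintype V] [DecidableEq V] (G : SimpleGraph V) [DecidableRel G.Adj]
    (n : ℕ) (hn : Fintype.card V = n) (h5 : 5 ≤ n)
    (hreg : G.IsRegularOfDegree (n - 3))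
    (B : Finset (Sym2 V)) (hBsub : ↑B ⊆ G.edgeSet)
    (hB : romanDominationNumber G < romanDominationNumber (G.deleteEdges ↑B)) :
    ∀ x : V, ∃ e ∈ B, x ∈ e :=
  roman_bondage_set_covers_general G n hn h5 hreg B hB
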